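/- Let n = 2 ≤ N, let Ω ⊆ ℝ² be open and connected, and let u : Ω → ℝ^N be a C² immersion solving the tangential system K_P(Du(x))·∇(K∘Du)(x) = 0 on Ω. Then there is a constant c ≥ 2 such that K(Du(x)) = c for every x ∈ Ω. Moreover, if there exists a point x₀ ∈ Ω at which S(Du(x₀)ᵀDu(x₀)) = 0, then c = 2 and u is conformal on Ω, i.e. Du(x)ᵀDu(x) = (|Du(x)|²/2)·I for all x ∈ Ω. -/

import Mathlib

/-!
For a Gram matrix `G = PᵀP` of size 2, `(tr G)² - 4 det G = -4 det S(G)`, and `det S(G)` is minus a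
sum of squares vanishing only when `S(G) = 0`. Hence `K(P) = tr G / √(det G) ≥ 2`, with equality
exactly when `S(G) = 0`.

Since `Pᵀ K_P(P)` is a positive multiple of `S(G)`, which is invertible when nonzero, the tangential
system forces `∇(K ∘ Du) = 0` wherever `S ≠ 0`; where `S = 0`, `K ∘ Du` attains its minimum `2`, so
its gradient vanishes there too. Thus `K ∘ Du` has zero derivative on the connected open set `Ω`
and is constant.
-/

open Matrix

/-- The dilation function `K(P) = |P|² / det(PᵀP)^(1/n)`, where `|P|² = tr(PᵀP)`. -/
noncomputable def dil {N n : ℕ} (P : Matrix (Fin N) (Fin n) ℝ) : ℝ :=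
  (Pᵀ * P).trace / (Pᵀ * P).det ^ ((1 : ℝ) / n)

/-- The Ahlfors operator `S(A) = (A + Aᵀ)/2 − (tr(A)/n)·I`. -/
noncomputable def ahl {n : ℕ} (A : Matrix (Fin n) (Fin n) ℝ) : Matrix (Fin n) (Fin n) ℝ :=
  (2⁻¹ : ℝ) • (A + Aᵀ) - (A.trace / (n : ℝ)) • 1

/-- `K_P(P) = 2·P·(PᵀP)⁻¹·S(PᵀP)/det(PᵀP)^(1/n)`. -/
noncomputable def dilGrad {N n : ℕ} (P : Matrix (Fin N) (Fin n) ℝ) : Matrix (Fin N) (Fin n) ℝ :=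
  (2 / (Pᵀ * P).det ^ ((1 : ℝ) / n)) • (P * (Pᵀ * P)⁻¹ * ahl (Pᵀ * P))

/-- The Jacobian matrix `Du(x) ∈ ℝ^{N×n}` of a map `u : ℝⁿ → ℝ^N`. -/
noncomputable def jac {n N : ℕ} (u : EuclideanSpace ℝ (Fin n) → (Fin N → ℝ))
    (x : EuclideanSpace ℝ (Fin n)) : Matrix (Fin N) (Fin n) ℝ :=
  Matrix.of fun α i => fderiv ℝ u x (EuclideanSpace.single i 1) α

/-- The gradient of a scalar function on `ℝⁿ`. -/
noncomputable def egrad {n : ℕ} (f : EuclideanSpace ℝ (Fin n) → ℝ)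
    (x : EuclideanSpace ℝ (Fin n)) : Fin n → ℝ :=
  fun i => fderiv ℝ f x (EuclideanSpace.single i 1)

lemma isSymm_transpose_mul {m n : Type*} [Fintype m] (P : Matrix m n ℝ) : (Pᵀ * P).IsSymm := by
  rw [IsSymm, transpose_mul, transpose_transpose]

lemma trace_transpose_mul_self_nonneg {m n : Type*} [Fintype m] [Fintype n] (P : Matrix m n ℝ) :
    0 ≤ (Pᵀ * P).trace := by
  simpa [conjTranspose_eq_transpose_of_trivial] using
    (posSemidef_conjTranspose_mul_self P).trace_nonneg

section Ahlfors

variable {n : ℕ}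

lemma ahl_of_isSymm {A : Matrix (Fin n) (Fin n) ℝ} (hA : A.IsSymm) :
    ahl A = A - (A.trace / n) • 1 := by
  rw [ahl, hA.eq, ← two_smul ℝ A, smul_smul, inv_mul_cancel₀ two_ne_zero, one_smul]

lemma ahl_eq_zero_iff_of_isSymm {A : Matrix (Fin n) (Fin n) ℝ} (hA : A.IsSymm) :
    ahl A = 0 ↔ A = (A.trace / n) • 1 := by
  rw [ahl_of_isSymm hA, sub_eq_zero]

lemma ahl_fin_two (A : Matrix (Fin 2) (Fin 2) ℝ) :
    ahl A = !![(A 0 0 - A 1 1) / 2, (A 0 1 + A 1 0) / 2;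
      (A 0 1 + A 1 0) / 2, (A 1 1 - A 0 0) / 2] := by
  ext i j
  fin_cases i <;> fin_cases j <;> simp [ahl, trace_fin_two] <;> ring

lemma det_ahl_fin_two (A : Matrix (Fin 2) (Fin 2) ℝ) :
    (ahl A).det = -(((A 0 0 - A 1 1) / 2) ^ 2 + ((A 0 1 + A 1 0) / 2) ^ 2) := by
  rw [ahl_fin_two, det_fin_two_of]
  ring

lemma det_ahl_nonpos (A : Matrix (Fin 2) (Fin 2) ℝ) : (ahl A).det ≤ 0 := by
  rw [det_ahl_fin_two]
  nlinarith

lemma det_ahl_eq_zero_iff (A : Matrix (Fin 2) (Fin 2) ℝ) : (ahl A).det = 0 ↔ ahl A = 0 := by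
  refine ⟨fun h => ?_, fun h => by rw [h]; simp⟩
  rw [det_ahl_fin_two] at h
  have hdiag : A 0 0 - A 1 1 = 0 := by nlinarith
  have hoff : A 0 1 + A 1 0 = 0 := by nlinarith
  rw [ahl_fin_two]
  ext i j
  fin_cases i <;> fin_cases j <;> simp <;> linarith

lemma trace_sq_sub_four_mul_det_of_isSymm {A : Matrix (Fin 2) (Fin 2) ℝ} (hA : A.IsSymm) :
    A.trace ^ 2 - 4 * A.det = -4 * (ahl A).det := by
  have h : A 1 0 = A 0 1 := hA.apply 0 1
  rw [det_ahl_fin_two, trace_fin_two, det_fin_two, h]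
  ring

end Ahlfors

section Dilation

variable {N : ℕ} (P : Matrix (Fin N) (Fin 2) ℝ)

lemma dil_fin_two : dil P = (Pᵀ * P).trace / √(Pᵀ * P).det := by
  rw [dil, Real.sqrt_eq_rpow]
  norm_num

lemma two_le_dil (hdet : 0 < (Pᵀ * P).det) : 2 ≤ dil P := by
  have hgap := trace_sq_sub_four_mul_det_of_isSymm (isSymm_transpose_mul P)
  have hsq : (2 * √(Pᵀ * P).det) ^ 2 ≤ (Pᵀ * P).trace ^ 2 := by
    rw [mul_pow, Real.sq_sqrt hdet.le]
    nlinarith [det_ahl_nonpos (Pᵀ * P)]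
  rw [dil_fin_two, le_div_iff₀ (Real.sqrt_pos.2 hdet)]
  exact (pow_le_pow_iff_left₀ (by positivity) (trace_transpose_mul_self_nonneg P)
    two_ne_zero).1 hsq

lemma dil_eq_two_iff (hdet : 0 < (Pᵀ * P).det) : dil P = 2 ↔ ahl (Pᵀ * P) = 0 := by
  have hgap := trace_sq_sub_four_mul_det_of_isSymm (isSymm_transpose_mul P)
  rw [dil_fin_two, div_eq_iff (Real.sqrt_pos.2 hdet).ne', ← det_ahl_eq_zero_iff,
    ← sq_eq_sq₀ (trace_transpose_mul_self_nonneg P) (by positivity), mul_pow,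
    Real.sq_sqrt hdet.le]
  constructor <;> intro h <;> linarith

end Dilation

lemma transpose_mul_dilGrad {N n : ℕ} (P : Matrix (Fin N) (Fin n) ℝ)
    (hdet : IsUnit (Pᵀ * P).det) :
    Pᵀ * dilGrad P = (2 / (Pᵀ * P).det ^ ((1 : ℝ) / n)) • ahl (Pᵀ * P) := by
  rw [dilGrad, Matrix.mul_smul, ← Matrix.mul_assoc, ← Matrix.mul_assoc, mul_nonsing_inv _ hdet,
    Matrix.one_mul]

lemma eq_zero_of_dilGrad_mulVec_eq_zero {N : ℕ} (P : Matrix (Fin N) (Fin 2) ℝ)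
    (hdet : 0 < (Pᵀ * P).det) (hS : ahl (Pᵀ * P) ≠ 0) {v : Fin 2 → ℝ}
    (hv : dilGrad P *ᵥ v = 0) : v = 0 := by
  refine eq_zero_of_mulVec_eq_zero ((det_ahl_eq_zero_iff _).not.2 hS) ?_
  have h := congrArg (Pᵀ *ᵥ ·) hv
  simp only [mulVec_mulVec, transpose_mul_dilGrad P hdet.ne'.isUnit, smul_mulVec, mulVec_zero] at h
  exact (smul_eq_zero.1 h).resolve_left (by positivity)

section Regularity

variable {n N : ℕ} {u : EuclideanSpace ℝ (Fin n) → (Fin N → ℝ)}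
  {x : EuclideanSpace ℝ (Fin n)}

lemma differentiableAt_jac_apply (hu : ContDiffAt ℝ 2 u x) (α : Fin N) (i : Fin n) :
    DifferentiableAt ℝ (fun y => jac u y α i) x := by
  have hDu : DifferentiableAt ℝ (fderiv ℝ u) x :=
    (hu.fderiv_right one_add_one_eq_two.le).differentiableAt one_ne_zero
  exact differentiableAt_pi.1 (hDu.clm_apply (differentiableAt_const _)) α

lemma differentiableAt_dil_jac (hu : ContDiffAt ℝ 2 u x)
    (hdet : 0 < ((jac u x)ᵀ * jac u x).det) :
    DifferentiableAt ℝ (fun y => dil (jac u y)) x := by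
  have hG (i j : Fin n) : DifferentiableAt ℝ (fun y => ((jac u y)ᵀ * jac u y) i j) x := by
    simp only [mul_apply, transpose_apply]
    exact .fun_sum fun α _ =>
      (differentiableAt_jac_apply hu α i).mul (differentiableAt_jac_apply hu α j)
  have htrace : DifferentiableAt ℝ (fun y => ((jac u y)ᵀ * jac u y).trace) x :=
    .fun_sum fun i _ => hG i i
  have hdet' : DifferentiableAt ℝ (fun y => ((jac u y)ᵀ * jac u y).det) x := by
    simp only [det_apply']
    exact .fun_sum fun σ _ =>
      (HasFDerivAt.finsetProd fun i _ => (hG (σ i) i).hasFDerivAt).differentiableAt.const_mul _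
  simp only [dil, div_eq_mul_inv]
  exact htrace.mul ((hdet'.rpow_const (.inl hdet.ne')).inv (Real.rpow_pos_of_pos hdet _).ne')

lemma fderiv_eq_zero_of_egrad_eq_zero {f : EuclideanSpace ℝ (Fin n) → ℝ} (h : egrad f x = 0) :
    fderiv ℝ f x = 0 := by
  refine ContinuousLinearMap.coe_injective <|
    (EuclideanSpace.basisFun (Fin n) ℝ).toBasis.ext fun i => ?_
  simpa [egrad] using congrFun h i

end Regularity

theorem two_dim_constant_dilation_general (N : ℕ)
    (Ω : Set (EuclideanSpace ℝ (Fin 2))) (hΩ : IsOpen Ω) (hconn : IsConnected Ω)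
    (u : EuclideanSpace ℝ (Fin 2) → (Fin N → ℝ))
    (hu : ContDiffOn ℝ 2 u Ω)
    (himm : ∀ x ∈ Ω, 0 < ((jac u x)ᵀ * jac u x).det)
    (htang : ∀ x ∈ Ω, (dilGrad (jac u x)).mulVec (egrad (fun y => dil (jac u y)) x) = 0) :
    ∃ c : ℝ, 2 ≤ c ∧ (∀ x ∈ Ω, dil (jac u x) = c) ∧
      ((∃ x₀ ∈ Ω, ahl ((jac u x₀)ᵀ * jac u x₀) = 0) →
        c = 2 ∧ ∀ x ∈ Ω,
          (jac u x)ᵀ * jac u x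
            = ((((jac u x)ᵀ * jac u x).trace) / 2) • (1 : Matrix (Fin 2) (Fin 2) ℝ)) := by
  have hdiff : DifferentiableOn ℝ (fun y => dil (jac u y)) Ω := fun x hx =>
    (differentiableAt_dil_jac (hu.contDiffAt (hΩ.mem_nhds hx)) (himm x hx)).differentiableWithinAt
  have hcrit : Ω.EqOn (fderiv ℝ fun y => dil (jac u y)) 0 := by
    intro x hx
    by_cases hS : ahl ((jac u x)ᵀ * jac u x) = 0
    · refine IsLocalMin.fderiv_eq_zero ?_
      filter_upwards [hΩ.mem_nhds hx] with y hy
      rw [(dil_eq_two_iff _ (himm x hx)).2 hS]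
      exact two_le_dil _ (himm y hy)
    · exact fderiv_eq_zero_of_egrad_eq_zero
        (eq_zero_of_dilGrad_mulVec_eq_zero _ (himm x hx) hS (htang x hx))
  obtain ⟨c, hc⟩ := hΩ.exists_is_const_of_fderiv_eq_zero hconn.isPreconnected hdiff hcrit
  obtain ⟨x₁, hx₁⟩ := hconn.nonempty
  refine ⟨c, hc x₁ hx₁ ▸ two_le_dil _ (himm x₁ hx₁), hc, fun ⟨x₀, hx₀, hS⟩ => ?_⟩
  have hc2 : c = 2 := hc x₀ hx₀ ▸ (dil_eq_two_iff _ (himm x₀ hx₀)).2 hS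
  refine ⟨hc2, fun x hx => ?_⟩
  have hconf : ahl ((jac u x)ᵀ * jac u x) = 0 := (dil_eq_two_iff _ (himm x hx)).1 (hc2 ▸ hc x hx)
  simpa using (ahl_eq_zero_iff_of_isSymm (isSymm_transpose_mul _)).1 hconf

/-- for `n = 2 ≤ N`, a `C²` immersion on a connected open `Ω ⊆ ℝ²` solving
the tangential system has constant dilation `c ≥ 2`; if moreover `S(Du(x₀)ᵀDu(x₀)) = 0`
for some `x₀ ∈ Ω` then `c = 2` and `u` is conformal on `Ω`. -/
theorem two_dim_constant_dilation (N : ℕ) (hN : 2 ≤ N)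
    (Ω : Set (EuclideanSpace ℝ (Fin 2))) (hΩ : IsOpen Ω) (hconn : IsConnected Ω)
    (u : EuclideanSpace ℝ (Fin 2) → (Fin N → ℝ))
    (hu : ContDiffOn ℝ 2 u Ω)
    (himm : ∀ x ∈ Ω, 0 < ((jac u x)ᵀ * jac u x).det)
    (htang : ∀ x ∈ Ω, (dilGrad (jac u x)).mulVec (egrad (fun y => dil (jac u y)) x) = 0) :
    ∃ c : ℝ, 2 ≤ c ∧ (∀ x ∈ Ω, dil (jac u x) = c) ∧
      ((∃ x₀ ∈ Ω, ahl ((jac u x₀)ᵀ * jac u x₀) = 0) →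
        c = 2 ∧ ∀ x ∈ Ω,
          (jac u x)ᵀ * jac u x
            = ((((jac u x)ᵀ * jac u x).trace) / 2) • (1 : Matrix (Fin 2) (Fin 2) ℝ)) :=
  two_dim_constant_dilation_general N Ω hΩ hconn u hu himm htang
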